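/- Let P be a partially ordered set, let F : P → ℝ be an antitone function taking values in [0,1] (antitone meaning q ≤ p implies F(q) ≤ F(p)), and let G ⊆ P be nonempty, downward directed, and generic for F. Then inf_{p ∈ G} F(p) = inf_{p ∈ G} F^w(p). -/

import Mathlib

/-- The weak regularization of `F : P → ℝ`:
`F^w(p) = sup_{q ≤ p} inf_{q' ≤ q} F(q')`. -/
noncomputable def wreg {P : Type*} [PartialOrder P] (F : P → ℝ) (p : P) : ℝ :=
  ⨆ q : {q : P // q ≤ p}, ⨅ q' : {q' : P // q' ≤ (q : P)}, F (q' : P)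

/-!
For `p ∈ G` and `ε > 0`, genericity gives `q ∈ G` with `F q < infBelow F q + ε`, and
directedness a common lower bound `c ∈ G` of `p` and `q`. Then
`inf_G F ≤ F c ≤ F q < infBelow F q + ε ≤ infBelow F c + ε ≤ F^w(p) + ε`,
while `F^w ≤ F` holds pointwise for antitone `F`.
-/

open Set

noncomputable def infBelow {P : Type*} [Preorder P] (F : P → ℝ) (q : P) : ℝ :=
  ⨅ q' : {q' : P // q' ≤ q}, F q'

instance Subtype.nonempty_le {P : Type*} [Preorder P] (p : P) : Nonempty {q : P // q ≤ p} :=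
  ⟨⟨p, le_rfl⟩⟩

section infBelow

variable {P : Type*} [Preorder P] {F : P → ℝ}

theorem infBelow_le (hF : BddBelow (range F)) {q q' : P} (h : q' ≤ q) :
    infBelow F q ≤ F q' :=
  ciInf_le (f := fun q' : {q' : P // q' ≤ q} => F q')
    (hF.mono (range_comp_subset_range _ _)) ⟨q', h⟩

theorem le_infBelow {a : ℝ} (ha : a ∈ lowerBounds (range F)) (q : P) : a ≤ infBelow F q :=
  le_ciInf fun q' => ha ⟨q', rfl⟩

theorem antitone_infBelow (hF : BddBelow (range F)) : Antitone (infBelow F) :=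
  fun _ _ hcq => le_ciInf fun q' => infBelow_le hF (q'.2.trans hcq)

end infBelow

section wreg

variable {P : Type*} [PartialOrder P] {F : P → ℝ}

theorem wreg_le (hF : BddBelow (range F)) (hmono : Monotone F) (p : P) : wreg F p ≤ F p :=
  ciSup_le fun q => (infBelow_le hF le_rfl).trans (hmono q.2)

theorem infBelow_le_wreg (hF : BddBelow (range F)) (hmono : Monotone F) {c p : P} (h : c ≤ p) :
    infBelow F c ≤ wreg F p :=
  le_ciSup (f := fun q : {q : P // q ≤ p} => infBelow F q)
    ⟨F p, forall_mem_range.2 fun q => (infBelow_le hF le_rfl).trans (hmono q.2)⟩ ⟨c, h⟩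

theorem iInf_eq_iInf_wreg_of_generic (hF : BddBelow (range F)) (hmono : Monotone F)
    {G : Set P} (hdir : DirectedOn (· ≥ ·) G)
    (hgen : ∀ ε > 0, ∃ q ∈ G, F q < infBelow F q + ε) :
    ⨅ p : G, F p = ⨅ p : G, wreg F p := by
  have ⟨a, ha⟩ := hF
  obtain ⟨q₀, hq₀, -⟩ := hgen 1 one_pos
  have : Nonempty G := ⟨⟨q₀, hq₀⟩⟩
  have hGF : BddBelow (range fun p : G => F p) := hF.mono (range_comp_subset_range _ _)
  have hGw : BddBelow (range fun p : G => wreg F p) :=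
    ⟨a, forall_mem_range.2 fun p => (le_infBelow ha p).trans (infBelow_le_wreg hF hmono le_rfl)⟩
  refine le_antisymm (le_ciInf fun p => le_of_forall_pos_le_add fun ε hε => ?_)
    (ciInf_mono hGw fun p => wreg_le hF hmono p)
  obtain ⟨q, hqG, hq⟩ := hgen ε hε
  obtain ⟨c, hcG, hcp, hcq⟩ := hdir p p.2 q hqG
  calc ⨅ p : G, F p ≤ F c := ciInf_le hGF ⟨c, hcG⟩
    _ ≤ F q := hmono hcq
    _ ≤ infBelow F q + ε := hq.le
    _ ≤ infBelow F c + ε := by gcongr; exact antitone_infBelow hF hcq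
    _ ≤ wreg F p + ε := by gcongr; exact infBelow_le_wreg hF hmono hcp

end wreg

theorem stmt9_general {P : Type*} [PartialOrder P] (F : P → ℝ)
    (hF : ∀ p, F p ∈ Set.Icc (0 : ℝ) 1)
    (hFmono : ∀ q p : P, q ≤ p → F q ≤ F p)
    (G : Set P)
    (hdir : ∀ a ∈ G, ∀ b ∈ G, ∃ c ∈ G, c ≤ a ∧ c ≤ b)
    (hgen : ∀ r : ℝ, 1 < r →
      ∃ q ∈ G, F q + (1 - ⨅ q' : {q' : P // q' ≤ q}, F (q' : P)) < r) :
    (⨅ p : G, F (p : P)) = ⨅ p : G, wreg F (p : P) := by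
  refine iInf_eq_iInf_wreg_of_generic ⟨0, forall_mem_range.2 fun p => (hF p).1⟩
    (fun q p => hFmono q p) hdir fun ε hε => ?_
  obtain ⟨q, hqG, hq⟩ := hgen (1 + ε) (by linarith)
  exact ⟨q, hqG, by unfold infBelow; linarith⟩

theorem stmt9 {P : Type*} [PartialOrder P] (F : P → ℝ)
    (hF : ∀ p, F p ∈ Set.Icc (0 : ℝ) 1)
    (hFmono : ∀ q p : P, q ≤ p → F q ≤ F p)
    (G : Set P) (hne : G.Nonempty)
    (hdir : ∀ a ∈ G, ∀ b ∈ G, ∃ c ∈ G, c ≤ a ∧ c ≤ b)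
    (hgen : ∀ r : ℝ, 1 < r →
      ∃ q ∈ G, F q + (1 - ⨅ q' : {q' : P // q' ≤ q}, F (q' : P)) < r) :
    (⨅ p : G, F (p : P)) = ⨅ p : G, wreg F (p : P) :=
  stmt9_general F hF hFmono G hdir hgen
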